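/- arXiv:2505.05353 — 7 statements merged into one kernel-verified Lean document; each statement's English description precedes it below -/
import Mathlib

section
/- Under identical and 0/1 utilities (so the utility of a bundle equals its cardinality), a complete Avg-envy-free allocation of m resources exists if and only if for every agent a_i, the quantity w_i · m / (∑_j w_j) is a nonnegative integer. -/
lemma fiber_card_sigma {n : ℕ} (k : Fin n → ℕ) (i : Fin n) :
    (Finset.univ.filter (fun s : Σ j, Fin (k j) => s.1 = i)).card = k i := by
  classical
  rw [Finset.card_filter]
  rw [← Finset.univ_sigma_univ, Finset.sum_sigma]
  simp [apply_ite Finset.card, Finset.sum_ite_eq']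

lemma exists_fiber_card {n : ℕ} (k : Fin n → ℕ) :
    ∃ π : Fin (∑ i, k i) → Fin n, ∀ i,
      (Finset.univ.filter (fun r => π r = i)).card = k i := by
  classical
  have hcard : Fintype.card (Fin (∑ i, k i)) = Fintype.card (Σ i, Fin (k i)) := by simp
  let e := Fintype.equivOfCardEq hcard
  refine ⟨fun r => (e r).1, fun i => ?_⟩
  rw [← fiber_card_sigma k i]
  apply Finset.card_bij' (fun r _ => e r) (fun s _ => e.symm s) <;> simp

/-- Under identical 0/1 utilities (bundle utility = its size), a complete
Avg-envy-free allocation of `m` resources exists iff for every agent `i`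
the quantity `w i * m / ∑ w` is a nonnegative integer. -/
theorem avg_ef_allocation_exists_iff (n m : ℕ) (hn : 0 < n) (w : Fin n → ℕ)
    (hw : ∀ i, 0 < w i) :
    (∃ π : Fin m → Fin n, ∀ i j : Fin n,
        ((Finset.univ.filter (fun r => π r = i)).card : ℝ) / (w i : ℝ) ≥
        ((Finset.univ.filter (fun r => π r = j)).card : ℝ) / (w j : ℝ)) ↔
    (∀ i : Fin n, ∃ k : ℕ, (w i : ℝ) * (m : ℝ) = (k : ℝ) * ∑ j, (w j : ℝ)) := by
  classical
  have hwR : ∀ i, (0:ℝ) < (w i : ℝ) := fun i => by exact_mod_cast hw i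
  constructor
  · rintro ⟨π, hπ⟩ i
    set c : Fin n → ℕ := fun i => (Finset.univ.filter (fun r => π r = i)).card with hc
    have hsum : ∑ j, c j = m := by
      rw [← Finset.card_fin m]
      exact (Finset.card_eq_sum_card_fiberwise (fun r _ => Finset.mem_univ (π r))).symm
    refine ⟨c i, ?_⟩
    have heq : ∀ j, (c i : ℝ) * (w j : ℝ) = (c j : ℝ) * (w i : ℝ) := by
      intro j
      have h1 := hπ i j
      have h2 := hπ j i
      have h3 : (c i : ℝ) / (w i : ℝ) = (c j : ℝ) / (w j : ℝ) := le_antisymm h2 h1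
      rw [div_eq_div_iff (ne_of_gt (hwR i)) (ne_of_gt (hwR j))] at h3
      linarith
    calc (w i : ℝ) * m = (w i : ℝ) * ∑ j, (c j : ℝ) := by
          rw [← hsum]; push_cast; ring
      _ = ∑ j, (c j : ℝ) * (w i : ℝ) := by rw [Finset.mul_sum]; exact Finset.sum_congr rfl (fun j _ => mul_comm _ _)
      _ = ∑ j, (c i : ℝ) * (w j : ℝ) := by simp_rw [heq]
      _ = (c i : ℝ) * ∑ j, (w j : ℝ) := by rw [Finset.mul_sum]
  · intro h
    choose k hk using h
    set W : ℝ := ∑ j, (w j : ℝ) with hW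
    have hWpos : (0:ℝ) < W :=
      Finset.sum_pos (fun j _ => hwR j) ⟨⟨0, hn⟩, Finset.mem_univ _⟩
    have hsum : ∑ i, k i = m := by
      have key : (∑ i, (k i : ℝ)) * W = (m : ℝ) * W := by
        rw [Finset.sum_mul]
        calc ∑ i, (k i : ℝ) * W = ∑ i, (w i : ℝ) * m := by
              exact Finset.sum_congr rfl (fun i _ => (hk i).symm)
          _ = (m : ℝ) * W := by rw [← Finset.sum_mul, hW]; ring
      have := mul_right_cancel₀ (ne_of_gt hWpos) key
      exact_mod_cast this
    subst hsum
    obtain ⟨π, hπ⟩ := exists_fiber_card k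
    refine ⟨π, fun i j => ?_⟩
    rw [hπ i, hπ j, ge_iff_le, div_le_div_iff₀ (hwR j) (hwR i)]
    have key : ((k j : ℝ) * w i) * W = ((k i : ℝ) * w j) * W := by
      calc ((k j : ℝ) * w i) * W = ((k j : ℝ) * W) * w i := by ring
        _ = ((w j : ℝ) * (∑ i, k i : ℕ)) * w i := by rw [← hk j]
        _ = ((w i : ℝ) * (∑ i, k i : ℕ)) * w j := by ring
        _ = ((k i : ℝ) * W) * w j := by rw [hk i]
        _ = ((k i : ℝ) * w j) * W := by ring
    exact le_of_eq (mul_right_cancel₀ (ne_of_gt hWpos) key)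
end

section
/- Under identical utility functions, in any SumAvg-envy-free allocation, if agents are ordered so that w_i ≤ w_{i+1}, then u(π(a_i)) ≤ u(π(a_{i+1})) for every i. -/
/-- Under identical utilities, in any SumAvg-envy-free allocation with agents
sorted ascending by weight, bundle utilities are nondecreasing over consecutive agents. -/
theorem sumavg_ef_utilities_monotone (n : ℕ) (w u : ℕ → ℝ)
    (hw : ∀ i < n, 0 < w i) (hwm : ∀ i, i + 1 < n → w i ≤ w (i + 1))
    (hu : ∀ i < n, 0 ≤ u i)
    (hsaef : ∀ i < n, ∀ j < n, u i ≥ u j ∨ u i / w i ≥ u j / w j) :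
    ∀ i, i + 1 < n → u i ≤ u (i + 1) := by
  intro i hi
  have hin : i < n := Nat.lt_of_succ_lt hi
  have hwi := hw i hin
  have hwi1 := hw (i+1) hi
  rcases hsaef (i+1) hi i hin with h | h
  · exact h
  · have hww := hwm i hi
    have h1 : u i ≤ u (i+1) / w (i+1) * w i := by
      rw [ge_iff_le, div_le_div_iff₀ hwi hwi1] at h
      calc u i = u i * w (i+1) / w (i+1) := by field_simp
        _ ≤ u (i+1) * w i / w (i+1) := by
            gcongr
        _ = u (i+1) / w (i+1) * w i := by ring
    have h2 : u (i+1) / w (i+1) * w i ≤ u (i+1) / w (i+1) * w (i+1) := by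
      apply mul_le_mul_of_nonneg_left hww
      exact div_nonneg (hu (i+1) hi) hwi1.le
    have : u (i+1) / w (i+1) * w (i+1) = u (i+1) := by field_simp
    linarith
end

section
/- Under identical utility functions, in any SumAvg-envy-free allocation, if agents are ordered so that w_i ≤ w_{i+1}, then u(π(a_i))/w_i ≥ u(π(a_{i+1}))/w_{i+1} for every i. -/
/-- Under identical utilities, in any SumAvg-envy-free allocation with agents
sorted ascending by weight, weighted ratios are nonincreasing over consecutive agents. -/
theorem sumavg_ef_ratios_antitone (n : ℕ) (w u : ℕ → ℝ)
    (hw : ∀ i < n, 0 < w i) (hwm : ∀ i, i + 1 < n → w i ≤ w (i + 1))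
    (hu : ∀ i < n, 0 ≤ u i)
    (hsaef : ∀ i < n, ∀ j < n, u i ≥ u j ∨ u i / w i ≥ u j / w j) :
    ∀ i, i + 1 < n → u i / w i ≥ u (i + 1) / w (i + 1) := by
  intro i h
  have hi : i < n := Nat.lt_of_succ_lt h
  have hwi := hw i hi
  have hwi1 := hw (i+1) h
  rcases hsaef i hi (i+1) h with hc | hc
  · have h1 : u (i+1) / w (i+1) ≤ u (i+1) / w i :=
      div_le_div_of_nonneg_left (hu (i+1) h) hwi (hwm i h)
    have h2 : u (i+1) / w i ≤ u i / w i := by gcongr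
      --
    exact h1.trans h2
  · exact hc
end

section
/- Under identical utility functions, with agents sorted by weight in ascending order (w_1 ≤ ... ≤ w_n), an allocation π is SumAvg-envy-free if and only if for every consecutive pair i, both u(π(a_i)) ≤ u(π(a_{i+1})) and u(π(a_i))/w_i ≥ u(π(a_{i+1}))/w_{i+1} hold. -/
/-- Under identical utilities with agents sorted ascending by weight, an allocation
is SumAvg-envy-free iff for every consecutive pair both `u i ≤ u (i+1)` and
`u i / w i ≥ u (i+1) / w (i+1)` hold. -/
theorem sumavg_ef_iff_consecutive (n : ℕ) (w u : ℕ → ℝ)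
    (hw : ∀ i < n, 0 < w i) (hwm : ∀ i, i + 1 < n → w i ≤ w (i + 1))
    (hu : ∀ i < n, 0 ≤ u i) :
    (∀ i < n, ∀ j < n, u i ≥ u j ∨ u i / w i ≥ u j / w j) ↔
    (∀ i, i + 1 < n → u i ≤ u (i + 1) ∧ u i / w i ≥ u (i + 1) / w (i + 1)) := by
  constructor
  · intro H i hi
    have hi' : i < n := Nat.lt_of_succ_lt hi
    have hwi := hw i hi'
    have hwi1 := hw (i+1) hi
    have hwm' := hwm i hi
    have hui := hu i hi'
    have hui1 := hu (i+1) hi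
    have ratio_of_le : u (i+1) ≤ u i → u i / w i ≥ u (i+1) / w (i+1) :=
      fun h => div_le_div₀ hui h hwi hwm'
    have le_of_ratio : u i / w i ≤ u (i+1) / w (i+1) → u i ≤ u (i+1) := by
      intro h
      have h2 : u i / w (i+1) ≤ u i / w i :=
        div_le_div_of_nonneg_left hui hwi hwm'
      have := h2.trans h
      rwa [div_le_div_iff_of_pos_right hwi1] at this
    rcases H i hi' (i+1) hi with h1 | h1 <;> rcases H (i+1) hi i hi' with h2 | h2
    · exact ⟨h2, ratio_of_le h1⟩
    · exact ⟨le_of_ratio h2, ratio_of_le h1⟩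
    · exact ⟨h2, h1⟩
    · exact ⟨le_of_ratio h2, h1⟩
  · intro H i hi j hj
    have mono : ∀ d k, k + d < n → u k ≤ u (k + d) := by
      intro d
      induction d with
      | zero => intro k _; simp
      | succ d ih =>
        intro k h
        have h1 : k + d < n := by omega
        have := (H (k + d) (by omega)).1
        calc u k ≤ u (k + d) := ih k h1
          _ ≤ u (k + d + 1) := this
          _ = u (k + (d + 1)) := by ring_nf
    have mono2 : ∀ d k, k + d < n → u (k + d) / w (k + d) ≤ u k / w k := by
      intro d
      induction d with
      | zero => intro k _; simp
      | succ d ih =>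
        intro k h
        have h1 : k + d < n := by omega
        have := (H (k + d) (by omega)).2
        calc u (k + (d + 1)) / w (k + (d + 1)) = u (k + d + 1) / w (k + d + 1) := by ring_nf
          _ ≤ u (k + d) / w (k + d) := this
          _ ≤ u k / w k := ih k h1
    rcases le_or_gt j i with h | h
    · left
      have := mono (i - j) j (by omega)
      rwa [Nat.add_sub_cancel' h] at this
    · right
      have := mono2 (j - i) i (by omega)
      rwa [Nat.add_sub_cancel' h.le] at this
end

section
/- In any house allocation (each agent receives exactly one resource) with utilities taking values in {0, 1}, a house allocation is SumAvg-envy-free if and only if it is Sum-envy-free. -/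
/-- For house allocations with 0/1 utilities, SumAvg-envy-freeness is equivalent
to Sum-envy-freeness. `U i j` denotes `u_i(π(a_j)) ∈ {0,1}`. -/
theorem house_sumavg_iff_sum (n : ℕ) (w : Fin n → ℝ) (U : Fin n → Fin n → ℝ)
    (hw : ∀ i, 0 < w i) (hU : ∀ i j, U i j = 0 ∨ U i j = 1) :
    (∀ i j, U i i ≥ U i j ∨ U i i / w i ≥ U i j / w j) ↔
    (∀ i j, U i i ≥ U i j) := by
  constructor
  · intro h i j
    rcases h i j with h1 | h1
    · exact h1
    · rcases hU i i with h2 | h2 <;> rcases hU i j with h3 | h3 <;> simp [h2, h3] at h1 ⊢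
      exact absurd h1 (not_le.mpr (hw j))
  · intro h i j
    exact Or.inl (h i j)
end

section
/- Under identical and 0/1 preferences (bundle utility equals bundle size), a complete SumAvg-envy-free allocation of m resources to agents with ascending weights w_1 ≤ ... ≤ w_n exists if and only if there exist nonnegative integers k_1 ≤ k_2 ≤ ... ≤ k_n with ∑ k_i = m and k_i / w_i ≥ k_{i+1} / w_{i+1} for all i. -/
/-!
Write `c i` for the size of agent `i`'s bundle. With ascending positive weights, envy-freeness
forces `c` to be monotone: if `i ≤ j` but `c j < c i`, then also `c j / w j < c i / w i`, so `j`
envies `i`. Given that, envy-freeness between `i ≤ j` says exactly `c j / w j ≤ c i / w i`, so the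
envy-free allocations are those whose size profile is monotone with antitone averages; and every
profile summing to `m` is the size profile of some allocation.
-/

open Finset

section Bundles

variable {α ι : Type*} [Fintype α] [DecidableEq ι]

def bundleSize (π : α → ι) (i : ι) : ℕ := #{r | π r = i}

theorem sum_bundleSize [Fintype ι] (π : α → ι) : ∑ i, bundleSize π i = Fintype.card α :=
  (card_eq_sum_card_fiberwise fun r _ => mem_univ (π r)).symm

theorem card_filter_sigma_fst_eq [Fintype ι] (k : ι → ℕ) (i : ι) :
    #{x : Σ i, Fin (k i) | x.1 = i} = k i := by
  rw [← Fintype.card_subtype, Fintype.card_congr (Equiv.sigmaSubtype (β := fun i => Fin (k i)) i),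
    Fintype.card_fin]

theorem exists_bundleSize_eq [Fintype ι] (k : ι → ℕ) (hk : ∑ i, k i = Fintype.card α) :
    ∃ π : α → ι, bundleSize π = k := by
  have e : α ≃ Σ i, Fin (k i) := Fintype.equivOfCardEq (by simp [hk])
  refine ⟨fun r => (e r).1, funext fun i => ?_⟩
  calc bundleSize (fun r => (e r).1) i = #{x : Σ i, Fin (k i) | x.1 = i} := card_equiv e (by simp)
    _ = k i := card_filter_sigma_fst_eq k i

end Bundles

theorem Fin.antitone_iff_forall_succ_le {α : Type*} [Preorder α] {n : ℕ} {f : Fin n → α} :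
    Antitone f ↔ ∀ i : ℕ, (h : i + 1 < n) → f ⟨i + 1, h⟩ ≤ f ⟨i, Nat.lt_of_succ_lt h⟩ := by
  cases n with
  | zero => exact ⟨fun _ i h => absurd h (by omega), fun _ i => i.elim0⟩
  | succ n =>
    rw [Fin.antitone_iff_succ_le]
    exact ⟨fun h i hi => h ⟨i, by omega⟩, fun h i => h i (by omega)⟩

section EnvyFree

variable {ι : Type*} [Preorder ι] {c : ι → ℕ} {w : ι → ℝ}

def SumAvgEnvyFree (c : ι → ℕ) (w : ι → ℝ) : Prop :=
  ∀ i j, c i ≥ c j ∨ (c i : ℝ) / w i ≥ c j / w j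

theorem SumAvgEnvyFree.monotone (h : SumAvgEnvyFree c w) (hw : ∀ i, 0 < w i) (hwm : Monotone w) :
    Monotone c := by
  intro i j hij
  by_contra! hlt
  have hratio : (c j : ℝ) / w j < c i / w i := calc
    (c j : ℝ) / w j < c i / w j := by gcongr; exact hw j
    _ ≤ c i / w i := div_le_div_of_nonneg_left (Nat.cast_nonneg _) (hw i) (hwm hij)
  rcases h j i with hle | hge
  · omega
  · linarith

theorem SumAvgEnvyFree.antitone_div (h : SumAvgEnvyFree c w) (hw : ∀ i, 0 < w i)
    (hwm : Monotone w) : Antitone fun i => (c i : ℝ) / w i := by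
  intro i j hij
  rcases h i j with hge | hratio
  · show (c j : ℝ) / w j ≤ c i / w i
    rw [le_antisymm (h.monotone hw hwm hij) hge]
    exact div_le_div_of_nonneg_left (Nat.cast_nonneg _) (hw i) (hwm hij)
  · exact hratio

end EnvyFree

section EnvyFreeLinearOrder

variable {ι : Type*} [LinearOrder ι] {c : ι → ℕ} {w : ι → ℝ}

theorem sumAvgEnvyFree_of_monotone_of_antitone (hc : Monotone c)
    (hcw : Antitone fun i => (c i : ℝ) / w i) : SumAvgEnvyFree c w := by
  intro i j
  rcases le_total i j with hij | hji
  · exact Or.inr (hcw hij)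
  · exact Or.inl (hc hji)

theorem sumAvgEnvyFree_iff (hw : ∀ i, 0 < w i) (hwm : Monotone w) :
    SumAvgEnvyFree c w ↔ Monotone c ∧ Antitone fun i => (c i : ℝ) / w i :=
  ⟨fun h => ⟨h.monotone hw hwm, h.antitone_div hw hwm⟩,
    fun ⟨hc, hcw⟩ => sumAvgEnvyFree_of_monotone_of_antitone hc hcw⟩

end EnvyFreeLinearOrder

/-- Under identical 0/1 utilities (bundle utility = bundle size) and agents with
ascending positive weights, a complete SumAvg-envy-free allocation of `m` resources
exists iff there are nonnegative integers `k_1 ≤ ... ≤ k_n` summing to `m` with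
`k_i / w_i ≥ k_{i+1} / w_{i+1}` for all consecutive `i`. -/
theorem sumavg_allocation_exists_iff (n m : ℕ) (w : Fin n → ℝ)
    (hw : ∀ i, 0 < w i) (hwm : Monotone w) :
    (∃ π : Fin m → Fin n, ∀ i j : Fin n,
        (Finset.univ.filter (fun r => π r = i)).card ≥
          (Finset.univ.filter (fun r => π r = j)).card ∨
        ((Finset.univ.filter (fun r => π r = i)).card : ℝ) / w i ≥
          ((Finset.univ.filter (fun r => π r = j)).card : ℝ) / w j) ↔
    (∃ k : Fin n → ℕ, Monotone k ∧ (∑ i, k i) = m ∧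
        ∀ i : ℕ, (h : i + 1 < n) →
          (k ⟨i, Nat.lt_of_succ_lt h⟩ : ℝ) / w ⟨i, Nat.lt_of_succ_lt h⟩ ≥
            (k ⟨i + 1, h⟩ : ℝ) / w ⟨i + 1, h⟩) := by
  constructor
  · rintro ⟨π, hπ⟩
    obtain ⟨hmono, hanti⟩ := (sumAvgEnvyFree_iff (c := bundleSize π) hw hwm).1 hπ
    refine ⟨bundleSize π, hmono, ?_, Fin.antitone_iff_forall_succ_le.1 hanti⟩
    simpa using sum_bundleSize π
  · rintro ⟨k, hk, hsum, hratio⟩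
    obtain ⟨π, rfl⟩ := exists_bundleSize_eq (α := Fin m) k (by simpa using hsum)
    exact ⟨π, (sumAvgEnvyFree_iff hw hwm).2 ⟨hk, Fin.antitone_iff_forall_succ_le.2 hratio⟩⟩
end

section
/- Under identical and 0/1 preferences with bundle sizes k_1,...,k_n and ascending weights w_1 ≤ ... ≤ w_n, SumAvg-envy-freeness of the allocation is equivalent to: k_1 ≤ k_2 ≤ ... ≤ k_n and k_1/w_1 ≥ k_2/w_2 ≥ ... ≥ k_n/w_n. -/
/-- Under identical 0/1 preferences with bundle sizes `k i` and ascending weights,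
SumAvg-envy-freeness is equivalent to `k` nondecreasing and the ratios `k i / w i`
nonincreasing. -/
theorem sumavg_ef_iff_monotone_sizes (n : ℕ) (w : ℕ → ℝ) (k : ℕ → ℕ)
    (hw : ∀ i < n, 0 < w i) (hwm : ∀ i, i + 1 < n → w i ≤ w (i + 1)) :
    (∀ i < n, ∀ j < n, k i ≥ k j ∨ (k i : ℝ) / w i ≥ (k j : ℝ) / w j) ↔
    (∀ i, i + 1 < n → k i ≤ k (i + 1) ∧ (k i : ℝ) / w i ≥ (k (i + 1) : ℝ) / w (i + 1)) := by
  constructor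
  · intro hef i hi
    have hi' : i < n := Nat.lt_of_succ_lt hi
    have hwi := hw i hi'
    have hwi1 := hw (i+1) hi
    have hwle := hwm i hi
    have hk : k i ≤ k (i+1) := by
      rcases hef (i+1) hi i hi' with h | h
      · exact h
      · rw [ge_iff_le, div_le_div_iff₀ hwi hwi1] at h
        have : (k i : ℝ) ≤ (k (i+1) : ℝ) := by nlinarith
        exact_mod_cast this
    refine ⟨hk, ?_⟩
    rcases hef i hi' (i+1) hi with h | h
    · have heq : k (i+1) = k i := le_antisymm h hk
      rw [heq, ge_iff_le]
      gcongr
    · exact h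
  · intro h
    have aux : ∀ d i, i + d < n → k i ≤ k (i + d) ∧
        (k (i + d) : ℝ) / w (i + d) ≤ (k i : ℝ) / w i := by
      intro d
      induction d with
      | zero => intro i _; simp
      | succ d ih =>
        intro i hd
        have h1 : i + d + 1 < n := by omega
        have h2 := ih i (by omega)
        have h3 := h (i + d) h1
        constructor
        · calc k i ≤ k (i + d) := h2.1
            _ ≤ k (i + d + 1) := h3.1
        · exact le_trans h3.2 h2.2
    intro i hi j hj
    rcases le_or_gt j i with hji | hij
    · left
      obtain ⟨d, rfl⟩ := Nat.exists_eq_add_of_le hji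
      exact (aux d j hi).1
    · right
      obtain ⟨d, rfl⟩ := Nat.exists_eq_add_of_le hij.le
      exact (aux d i hj).2
end
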